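/- Let R → S → T be surjective homomorphisms of noetherian local rings, with α : R → S, β : S → T, and let M be a finitely generated T-module. If M is inert by any two of the three homomorphisms α, β, β∘α, then M is inert by the third as well. -/

import Mathlib

open CategoryTheory CategoryTheory.MonoidalCategory CategoryTheory.Abelian
open IsLocalRing PowerSeries TensorProduct HomologicalComplex

noncomputable section

set_option maxHeartbeats 1000000

/-- The length of a module, as a natural number: the Krull dimension of its lattice of
submodules.  For a finite length module this is the usual length; for a module annihilated
by the maximal ideal of a local ring it is the dimension over the residue field. -/
def lengthNat (R : Type) [CommRing R] (M : Type) [AddCommGroup M] [Module R M] : ℕ :=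
  (WithBot.unbotD 0 (Order.krullDim (Submodule R M))).toNat

/-- The residue field of a local ring, as an object of its module category. -/
def resFld (R : Type) [CommRing R] [IsLocalRing R] : ModuleCat R :=
  ModuleCat.of R (IsLocalRing.ResidueField R)

/-- The `i`-th Tor module `Tor_i^R(M, N)`. -/
def TorM (R : Type) [CommRing R] (i : ℕ) (M N : ModuleCat R) : ModuleCat R :=
  ((CategoryTheory.Tor (ModuleCat R) i).obj M).obj N

/-- The map `Tor_i^R(f, N) : Tor_i^R(M, N) → Tor_i^R(M', N)` induced in the first variable
by `f : M → M'`. -/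
def TorMap (R : Type) [CommRing R] (i : ℕ) {M M' : ModuleCat R} (f : M ⟶ M')
    (N : ModuleCat R) : TorM R i M N ⟶ TorM R i M' N :=
  ((CategoryTheory.Tor (ModuleCat R) i).map f).app N

/-- The Poincaré series `P^R_M(z) = Σ_i rank_k Tor_i^R(M, k) zⁱ` of a module `M` over a
local ring `R` with residue field `k`. -/
def poincareSeries (R : Type) [CommRing R] [IsLocalRing R] (M : ModuleCat R) :
    PowerSeries ℚ :=
  PowerSeries.mk fun i => (lengthNat R (TorM R i M (resFld R)) : ℚ)

/-- A surjective local homomorphism `φ : R → S` is Golod if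
`P^S_k(z)·(1 - z·(P^R_S(z) - 1)) = P^R_k(z)`, where `P^R_S` is the Poincaré series of `S`
viewed as an `R`-module via `φ`. -/
def IsGolodHom {R S : Type} [CommRing R] [CommRing S] [IsLocalRing R] [IsLocalRing S]
    (φ : R →+* S) : Prop :=
  poincareSeries S (resFld S) *
      (1 - PowerSeries.X *
        (poincareSeries R ((ModuleCat.restrictScalars φ).obj (ModuleCat.of S S)) - 1)) =
    poincareSeries R (resFld R)

/-- An `R`-module `M` is inert by a surjective local homomorphism `κ : P → R` if
`P^R_k(z)·P^P_M(z) = P^P_k(z)·P^R_M(z)`. -/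
def IsInertBy {P R : Type} [CommRing P] [CommRing R] [IsLocalRing P] [IsLocalRing R]
    (κ : P →+* R) (M : ModuleCat R) : Prop :=
  poincareSeries R (resFld R) * poincareSeries P ((ModuleCat.restrictScalars κ).obj M) =
    poincareSeries P (resFld P) * poincareSeries R M

/-!
The Poincaré series of the residue field has constant term `1`, so it is invertible in `ℚ⟦z⟧`.
Hence `M` is inert by `κ : P → R` exactly when the normalized series `P^P_M / P^P_k` and
`P^R_M / P^R_k` coincide, and the two-out-of-three property is transitivity of equality.
-/

theorem lengthNat_eq_toNat_length (R : Type) [CommRing R] (M : Type) [AddCommGroup M]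
    [Module R M] : lengthNat R M = (Module.length R M).toNat := by
  rw [lengthNat, ← Module.coe_length, WithBot.unbotD_coe]

theorem maximalIdeal_smul_top_residueField (R : Type) [CommRing R] [IsLocalRing R] :
    maximalIdeal R • (⊤ : Submodule R (ResidueField R)) = ⊥ := by
  rw [Ideal.smul_top_eq_map, ResidueField.algebraMap_eq, Submodule.restrictScalars_eq_bot_iff,
    Ideal.map_eq_bot_iff_le_ker, ker_residue]

instance isSimpleModule_residueField (R : Type) [CommRing R] [IsLocalRing R] :
    IsSimpleModule R (ResidueField R) :=
  isSimpleModule_iff_isCoatom.mpr (maximalIdeal.isMaximal R).out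

def residueFieldTensorSelf (R : Type) [CommRing R] [IsLocalRing R] :
    ResidueField R ⊗[R] ResidueField R ≃ₗ[R] ResidueField R :=
  quotTensorEquivQuotSMul (ResidueField R) (maximalIdeal R) ≪≫ₗ
    Submodule.quotEquivOfEqBot _ (maximalIdeal_smul_top_residueField R)

def torZeroIso (R : Type) [CommRing R] (M N : ModuleCat R) :
    TorM R 0 M N ≅ ModuleCat.of R (M ⊗[R] N) :=
  have : Limits.PreservesFiniteColimits ((tensoringLeft (ModuleCat R)).obj M) :=
    Limits.PreservesColimits.preservesFiniteColimits (tensorLeft M)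
  ((tensoringLeft (ModuleCat R)).obj M).leftDerivedZeroIsoSelf.app N

theorem coeff_zero_poincareSeries_resFld (R : Type) [CommRing R] [IsLocalRing R] :
    coeff 0 (poincareSeries R (resFld R)) = 1 := by
  have hlength : Module.length R (TorM R 0 (resFld R) (resFld R)) = 1 :=
    ((torZeroIso R _ _).toLinearEquiv ≪≫ₗ residueFieldTensorSelf R).length_eq.trans
      (Module.length_eq_one R _)
  rw [poincareSeries, coeff_mk, lengthNat_eq_toNat_length, hlength]
  rfl

def poincareSeriesRatio (R : Type) [CommRing R] [IsLocalRing R] (M : ModuleCat R) : ℚ⟦X⟧ :=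
  poincareSeries R M * (poincareSeries R (resFld R))⁻¹

theorem poincareSeries_resFld_mul_inv (R : Type) [CommRing R] [IsLocalRing R] :
    poincareSeries R (resFld R) * (poincareSeries R (resFld R))⁻¹ = 1 :=
  PowerSeries.mul_inv_cancel _ <| by
    simp [← coeff_zero_eq_constantCoeff_apply, coeff_zero_poincareSeries_resFld]

theorem isInertBy_iff_poincareSeriesRatio_eq {P R : Type} [CommRing P] [CommRing R]
    [IsLocalRing P] [IsLocalRing R] (κ : P →+* R) (M : ModuleCat R) :
    IsInertBy κ M ↔
      poincareSeriesRatio R M = poincareSeriesRatio P ((ModuleCat.restrictScalars κ).obj M) := by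
  have hR := poincareSeries_resFld_mul_inv R
  have hP := poincareSeries_resFld_mul_inv P
  rw [IsInertBy, poincareSeriesRatio, poincareSeriesRatio]
  set a := poincareSeries R (resFld R)
  set b := poincareSeries P (resFld P)
  set mR := poincareSeries R M
  set mP := poincareSeries P ((ModuleCat.restrictScalars κ).obj M)
  constructor
  · intro h
    linear_combination (-a⁻¹ * b⁻¹) * h + (mP * b⁻¹) * hR + (-mR * a⁻¹) * hP
  · intro h
    linear_combination (-a * b) * h + (b * mR) * hR + (-a * mP) * hP

theorem statement10_general (R S T : Type) [CommRing R] [CommRing S] [CommRing T]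
    [IsLocalRing R] [IsLocalRing S] [IsLocalRing T]
    (α : R →+* S) (β : S →+* T)
    (M : ModuleCat T) :
    ((IsInertBy β M ∧ IsInertBy α ((ModuleCat.restrictScalars β).obj M)) →
        IsInertBy (β.comp α) M) ∧
    ((IsInertBy β M ∧ IsInertBy (β.comp α) M) →
        IsInertBy α ((ModuleCat.restrictScalars β).obj M)) ∧
    ((IsInertBy α ((ModuleCat.restrictScalars β).obj M) ∧ IsInertBy (β.comp α) M) →
        IsInertBy β M) := by
  have restrict_comp : (ModuleCat.restrictScalars α).obj ((ModuleCat.restrictScalars β).obj M) =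
      (ModuleCat.restrictScalars (β.comp α)).obj M := rfl
  simp only [isInertBy_iff_poincareSeriesRatio_eq, restrict_comp]
  exact ⟨fun ⟨hβ, hα⟩ => hβ.trans hα, fun ⟨hβ, hβα⟩ => hβ.symm.trans hβα,
    fun ⟨hα, hβα⟩ => hβα.trans hα.symm⟩

/-- Remark 2.4.  Let `α : R → S`, `β : S → T` be surjective local
homomorphisms and `M` a finitely generated `T`-module.  If `M` is inert by any two of
`α`, `β`, `β∘α`, then it is inert by the third. -/
theorem statement10 (R S T : Type) [CommRing R] [CommRing S] [CommRing T]
    [IsLocalRing R] [IsLocalRing S] [IsLocalRing T]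
    (α : R →+* S) (β : S →+* T) (hα : Function.Surjective α) (hβ : Function.Surjective β)
    (M : ModuleCat T) [Module.Finite T M] :
    ((IsInertBy β M ∧ IsInertBy α ((ModuleCat.restrictScalars β).obj M)) →
        IsInertBy (β.comp α) M) ∧
    ((IsInertBy β M ∧ IsInertBy (β.comp α) M) →
        IsInertBy α ((ModuleCat.restrictScalars β).obj M)) ∧
    ((IsInertBy α ((ModuleCat.restrictScalars β).obj M) ∧ IsInertBy (β.comp α) M) →
        IsInertBy β M) :=
  statement10_general R S T α β M

end
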